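/- arXiv:1801.02532 — 2 statements merged into one kernel-verified Lean document; each statement's English description precedes it below -/
import Mathlib

section
/- For the graph G formed by a clique of size n together with an additional vertex joined to exactly m vertices of the clique (1 ≤ m ≤ n), the specialty S(G) equals (n-1)·C(n,2) + m(3m-1)/2. -/
/-!
Counting every edge from both ends, `2 S(G) = ∑ᵥ ∑_{w ~ v} min (deg v) (deg w)`. The degrees are
`n` on the `m` clique vertices joined to the extra vertex, `n - 1` on the other `n - m` clique
vertices and `m` on the extra vertex. A vertex of degree `n` has maximal degree, so its inner sum
is the degree sum minus `n`; a vertex of degree `n - 1` sees only neighbours of degree `≥ n - 1`;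
the extra vertex sees `m` neighbours of degree `n ≥ m`. Adding up gives
`2 S(G) = n (n - 1)² + m (3m - 1)`, and `2 C(n, 2) = n (n - 1)`.
-/

open scoped Classical
open Finset

/-- The specialty of a graph: sum over edges of the min of the endpoint degrees. -/
noncomputable def specialty {V : Type*} [Fintype V] (G : SimpleGraph V) : ℕ :=
  ∑ e ∈ G.edgeFinset,
    Sym2.lift ⟨fun u v => min (G.degree u) (G.degree v),
      fun u v => min_comm (G.degree u) (G.degree v)⟩ e

/-- `K_n` together with an extra vertex (the vertex `n`) joined to exactly the `m`
clique vertices `0, …, m-1`. -/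
def cliquePlusPendant (n m : ℕ) : SimpleGraph (Fin (n + 1)) where
  Adj u v := u ≠ v ∧
    (((u : ℕ) < n ∧ (v : ℕ) < n) ∨ ((u : ℕ) = n ∧ (v : ℕ) < m) ∨
      ((v : ℕ) = n ∧ (u : ℕ) < m))
  symm := by constructor; intro u v ⟨h1, h2⟩; exact ⟨h1.symm, by tauto⟩
  loopless := by constructor; intro u ⟨h, _⟩; exact h rfl

namespace SimpleGraph

section Darts

variable {V M : Type*} [Fintype V] [AddCommMonoid M] (G : SimpleGraph V) [DecidableRel G.Adj]

theorem sum_darts_eq_sum_sum_neighborFinset (f : V → V → M) :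
    ∑ d : G.Dart, f d.fst d.snd = ∑ x, ∑ y ∈ G.neighborFinset x, f x y := by
  rw [Finset.sum_sigma']
  exact Finset.sum_bij' (fun d _ => ⟨d.fst, d.snd⟩) (fun p hp => ⟨(p.1, p.2), by simpa using hp⟩)
    (by simp) (by simp) (by simp) (by simp) (by simp)

theorem sum_darts_eq_two_nsmul_sum_edgeFinset [DecidableEq V] (f : V → V → M)
    (hf : ∀ u v, f u v = f v u) :
    ∑ d : G.Dart, f d.fst d.snd = 2 • ∑ e ∈ G.edgeFinset, Sym2.lift ⟨f, hf⟩ e := by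
  rw [← Finset.sum_fiberwise_of_maps_to (g := Dart.edge) (t := G.edgeFinset) (by simp),
    Finset.smul_sum]
  refine sum_congr rfl fun e he => ?_
  rw [sum_congr rfl fun d hd => ?_, sum_const, G.dart_edge_fiber_card e (mem_edgeFinset.1 he)]
  rw [← (mem_filter.1 hd).2]
  rfl

end Darts

variable {V : Type*} [Fintype V] (G : SimpleGraph V)

noncomputable def specialtyAt (v : V) : ℕ :=
  ∑ w ∈ G.neighborFinset v, min (G.degree v) (G.degree w)

theorem two_mul_specialty : 2 * specialty G = ∑ v, G.specialtyAt v := by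
  rw [specialty, ← smul_eq_mul, ← sum_darts_eq_two_nsmul_sum_edgeFinset]
  exact sum_darts_eq_sum_sum_neighborFinset G fun x y => min (G.degree x) (G.degree y)

end SimpleGraph

theorem Fin.sum_univ_eq_of_lt_of_le {M : Type*} [AddCommMonoid M] {n m : ℕ} (hmn : m ≤ n)
    (f : Fin n → M) {a b : M} (ha : ∀ i : Fin n, (i : ℕ) < m → f i = a)
    (hb : ∀ i : Fin n, m ≤ (i : ℕ) → f i = b) :
    ∑ i, f i = m • a + (n - m) • b := by
  rw [← sum_filter_add_sum_filter_not univ (fun i : Fin n => (i : ℕ) < m),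
    sum_congr rfl fun i hi => ha i (mem_filter.1 hi).2,
    sum_congr rfl fun i hi => hb i (not_lt.1 (mem_filter.1 hi).2), Finset.sum_const,
    Finset.sum_const, filter_not, card_sdiff_of_subset (filter_subset _ _),
    Fin.card_filter_val_lt, card_univ, Fintype.card_fin, min_eq_right hmn]

section cliquePlusPendant

open SimpleGraph

variable {n m : ℕ} {v : Fin (n + 1)}

theorem cliquePlusPendant_neighborFinset_of_lt (hmn : m ≤ n) (hv : (v : ℕ) < m) :
    (cliquePlusPendant n m).neighborFinset v = univ.erase v := by
  ext w
  have := w.isLt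
  rw [mem_neighborFinset]
  simp only [mem_erase, mem_univ, and_true, cliquePlusPendant, ne_eq, Fin.ext_iff]
  omega

theorem cliquePlusPendant_neighborFinset_of_le_of_lt (hmv : m ≤ v) (hvn : (v : ℕ) < n) :
    (cliquePlusPendant n m).neighborFinset v =
      ({w | (w : ℕ) < n} : Finset (Fin (n + 1))).erase v := by
  ext w
  have := w.isLt
  rw [mem_neighborFinset]
  simp only [mem_erase, mem_filter, mem_univ, true_and, cliquePlusPendant, ne_eq, Fin.ext_iff]
  omega

theorem cliquePlusPendant_neighborFinset_last (hmn : m ≤ n) :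
    (cliquePlusPendant n m).neighborFinset (Fin.last n) =
      ({w | (w : ℕ) < m} : Finset (Fin (n + 1))) := by
  ext w
  have := w.isLt
  rw [mem_neighborFinset]
  simp only [mem_filter, mem_univ, true_and, cliquePlusPendant, ne_eq, Fin.ext_iff,
    Fin.val_last]
  omega

theorem cliquePlusPendant_degree_of_lt (hmn : m ≤ n) (hv : (v : ℕ) < m) :
    (cliquePlusPendant n m).degree v = n := by
  rw [← card_neighborFinset_eq_degree, cliquePlusPendant_neighborFinset_of_lt hmn hv,
    card_erase_of_mem (mem_univ v), card_univ, Fintype.card_fin, Nat.add_sub_cancel]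

theorem cliquePlusPendant_degree_add_one_of_le_of_lt (hmv : m ≤ v) (hvn : (v : ℕ) < n) :
    (cliquePlusPendant n m).degree v + 1 = n := by
  rw [← card_neighborFinset_eq_degree, cliquePlusPendant_neighborFinset_of_le_of_lt hmv hvn,
    card_erase_add_one (by simpa using hvn), Fin.card_filter_val_lt, min_eq_right (by omega)]

theorem cliquePlusPendant_degree_last (hmn : m ≤ n) :
    (cliquePlusPendant n m).degree (Fin.last n) = m := by
  rw [← card_neighborFinset_eq_degree, cliquePlusPendant_neighborFinset_last hmn,
    Fin.card_filter_val_lt, min_eq_right (by omega)]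

theorem cliquePlusPendant_sum_degree (hmn : m ≤ n) :
    ∑ w, (cliquePlusPendant n m).degree w = m * n + (n - m) * (n - 1) + m := by
  rw [Fin.sum_univ_castSucc, cliquePlusPendant_degree_last hmn,
    Fin.sum_univ_eq_of_lt_of_le hmn _ (b := n - 1)
      (fun i hi => cliquePlusPendant_degree_of_lt hmn hi)
      (fun i hi => by
        have := cliquePlusPendant_degree_add_one_of_le_of_lt (v := i.castSucc) hi i.isLt
        omega),
    smul_eq_mul, smul_eq_mul]

theorem cliquePlusPendant_specialtyAt_add_of_lt (hmn : m ≤ n) (hv : (v : ℕ) < m) :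
    (cliquePlusPendant n m).specialtyAt v + n =
      ∑ w, (cliquePlusPendant n m).degree w := by
  have hmax : ∀ w, (cliquePlusPendant n m).degree w ≤ n := fun w =>
    Nat.le_of_lt_succ (((cliquePlusPendant n m).degree_lt_card_verts w).trans_eq
      (Fintype.card_fin _))
  rw [specialtyAt, cliquePlusPendant_neighborFinset_of_lt hmn hv,
    ← sum_erase_add _ _ (mem_univ v), cliquePlusPendant_degree_of_lt hmn hv,
    sum_congr rfl fun w _ => min_eq_right (hmax w)]

theorem cliquePlusPendant_specialtyAt_of_le_of_lt (hmv : m ≤ v) (hvn : (v : ℕ) < n) :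
    (cliquePlusPendant n m).specialtyAt v = (n - 1) ^ 2 := by
  have hv := cliquePlusPendant_degree_add_one_of_le_of_lt hmv hvn
  have hle : ∀ w ∈ (cliquePlusPendant n m).neighborFinset v,
      (cliquePlusPendant n m).degree v ≤ (cliquePlusPendant n m).degree w := by
    intro w hw
    rw [cliquePlusPendant_neighborFinset_of_le_of_lt hmv hvn, mem_erase, mem_filter] at hw
    rcases lt_or_ge (w : ℕ) m with hwm | hwm
    · rw [cliquePlusPendant_degree_of_lt (hmv.trans hvn.le) hwm]
      omega
    · have := cliquePlusPendant_degree_add_one_of_le_of_lt hwm hw.2.2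
      omega
  rw [specialtyAt, sum_congr rfl fun w hw => min_eq_left (hle w hw), sum_const,
    card_neighborFinset_eq_degree, smul_eq_mul, ← sq, Nat.eq_sub_of_add_eq hv]

theorem cliquePlusPendant_specialtyAt_last (hmn : m ≤ n) :
    (cliquePlusPendant n m).specialtyAt (Fin.last n) = m ^ 2 := by
  have hle : ∀ w ∈ (cliquePlusPendant n m).neighborFinset (Fin.last n),
      (cliquePlusPendant n m).degree (Fin.last n) ≤ (cliquePlusPendant n m).degree w := by
    intro w hw
    rw [cliquePlusPendant_neighborFinset_last hmn, mem_filter] at hw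
    rw [cliquePlusPendant_degree_last hmn, cliquePlusPendant_degree_of_lt hmn hw.2]
    exact hmn
  rw [specialtyAt, sum_congr rfl fun w hw => min_eq_left (hle w hw), sum_const,
    card_neighborFinset_eq_degree, smul_eq_mul, ← sq, cliquePlusPendant_degree_last hmn]

theorem two_mul_specialty_cliquePlusPendant (hmn : m ≤ n) :
    2 * (specialty (cliquePlusPendant n m) : ℤ) = n * (n - 1) ^ 2 + m * (3 * m - 1) := by
  have hsplit := congrArg (Nat.cast : ℕ → ℤ) (cliquePlusPendant n m).two_mul_specialty
  push_cast at hsplit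
  have hsmall : ∀ i : Fin n, (i : ℕ) < m →
      ((cliquePlusPendant n m).specialtyAt i.castSucc : ℤ) = (n - 1) ^ 2 + 2 * m - 1 := by
    intro i hi
    have h := cliquePlusPendant_specialtyAt_add_of_lt (v := i.castSucc) hmn hi
    rw [cliquePlusPendant_sum_degree hmn] at h
    zify [hmn, (show 1 ≤ n by omega)] at h
    linear_combination h
  have hlarge : ∀ i : Fin n, m ≤ (i : ℕ) →
      ((cliquePlusPendant n m).specialtyAt i.castSucc : ℤ) = (n - 1) ^ 2 := by
    intro i hi
    rw [cliquePlusPendant_specialtyAt_of_le_of_lt (v := i.castSucc) hi i.isLt, Nat.cast_pow,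
      Nat.cast_pred (by omega)]
  rw [hsplit, Fin.sum_univ_castSucc, Fin.sum_univ_eq_of_lt_of_le hmn _ hsmall hlarge,
    cliquePlusPendant_specialtyAt_last hmn, nsmul_eq_mul, nsmul_eq_mul, Nat.cast_sub hmn]
  push_cast
  ring

end cliquePlusPendant

theorem specialty_cliquePlusPendant_general (n m : ℕ) (hmn : m ≤ n) :
    (specialty (cliquePlusPendant n m) : ℤ) =
      (n - 1) * n.choose 2 + (m * (3 * m - 1)) / 2 := by
  have hchooseℚ : (2 * n.choose 2 : ℚ) = n * (n - 1) := by
    rw [Nat.cast_choose_two]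
    ring
  have hchoose : 2 * (n.choose 2 : ℤ) = n * (n - 1) := by exact_mod_cast hchooseℚ
  have hm3 : (m : ℤ) * (3 * m - 1) =
      2 * (specialty (cliquePlusPendant n m) - (n - 1) * n.choose 2) := by
    linear_combination (two_mul_specialty_cliquePlusPendant hmn).symm + (n - 1) * hchoose
  rw [hm3, Int.mul_ediv_cancel_left _ two_ne_zero]
  ring

theorem specialty_cliquePlusPendant (n m : ℕ) (hm : 1 ≤ m) (hmn : m ≤ n) :
    (specialty (cliquePlusPendant n m) : ℤ) =
      (n - 1) * n.choose 2 + (m * (3 * m - 1)) / 2 :=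
  specialty_cliquePlusPendant_general n m hmn
end

section
/- Let G be a graph with weakly decreasing degree sequence (d_1,...,d_k) where d_1 = k-2 and k ≥ 2. Then there exists a graph G' with the same degree sequence as G, with S(G') ≥ S(G), and such that some vertex of degree d_1 in G' is adjacent to all vertices except one vertex of minimal degree. -/
/-!
Let `u` have degree `k - 2`, so that it misses exactly one vertex `w`. If `w` has minimal degree
we are done. Otherwise pick `x` of minimal degree; then `x` is a neighbour of `u`, and since
`deg x < deg w` while `u` is adjacent to `x` but not to `w`, some neighbour `y` of `w` is neither
`x` nor adjacent to `x`. The 2-switch replacing the edges `ux`, `wy` by `uw`, `xy` keeps every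
degree, and it changes `S` by `min(d_u, d_w) + min(d_x, d_y) - min(d_u, d_x) - min(d_w, d_y)
= d_w - min(d_w, d_y) ≥ 0`, because `d_x ≤ d_y` and `d_x < d_w ≤ d_u`.
-/

open scoped Classical
open Finset

namespace SimpleGraph

variable {V : Type*} (G : SimpleGraph V) {a b c d : V}

def twoSwitch (a b c d : V) : SimpleGraph V :=
  G.deleteEdges {s(a, b), s(c, d)} ⊔ edge a c ⊔ edge b d

lemma twoSwitch_comm (a b c d : V) : G.twoSwitch a b c d = G.twoSwitch c d a b := by
  ext v w
  simp only [twoSwitch, sup_adj, deleteEdges_adj, edge_adj, Set.mem_insert_iff,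
    Set.mem_singleton_iff]
  tauto

lemma twoSwitch_swap (a b c d : V) : G.twoSwitch a b c d = G.twoSwitch b a d c := by
  ext v w
  simp only [twoSwitch, sup_adj, deleteEdges_adj, edge_adj, Set.mem_insert_iff,
    Set.mem_singleton_iff, Sym2.eq_swap (a := a), Sym2.eq_swap (a := c)]
  tauto

variable [Fintype V]

lemma neighborFinset_twoSwitch_left (hab : G.Adj a b) (hac' : a ≠ c) (had : a ≠ d) :
    (G.twoSwitch a b c d).neighborFinset a = insert c ((G.neighborFinset a).erase b) := by
  ext z
  rw [mem_neighborFinset, Finset.mem_insert, Finset.mem_erase, mem_neighborFinset]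
  simp only [twoSwitch, sup_adj, deleteEdges_adj, edge_adj,
    Set.mem_insert_iff, Set.mem_singleton_iff, Sym2.eq_iff]
  have := G.ne_of_adj hab
  grind

lemma degree_twoSwitch_left (hab : G.Adj a b) (hac : ¬G.Adj a c) (hac' : a ≠ c) (had : a ≠ d) :
    (G.twoSwitch a b c d).degree a = G.degree a := by
  rw [← card_neighborFinset_eq_degree, ← card_neighborFinset_eq_degree,
    G.neighborFinset_twoSwitch_left hab hac' had,
    Finset.card_insert_of_notMem (by simp [hac]),
    Finset.card_erase_add_one ((G.mem_neighborFinset a b).mpr hab)]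

lemma neighborFinset_twoSwitch_of_ne {v : V} (hva : v ≠ a) (hvb : v ≠ b) (hvc : v ≠ c)
    (hvd : v ≠ d) : (G.twoSwitch a b c d).neighborFinset v = G.neighborFinset v := by
  ext z
  rw [mem_neighborFinset, mem_neighborFinset]
  simp only [twoSwitch, sup_adj, deleteEdges_adj, edge_adj,
    Set.mem_insert_iff, Set.mem_singleton_iff, Sym2.eq_iff]
  grind

lemma degree_twoSwitch (hab : G.Adj a b) (hcd : G.Adj c d) (hac : ¬G.Adj a c)
    (hbd : ¬G.Adj b d) (hac' : a ≠ c) (hbd' : b ≠ d) (v : V) :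
    (G.twoSwitch a b c d).degree v = G.degree v := by
  have had : a ≠ d := by rintro rfl; exact hac hcd.symm
  have hbc : b ≠ c := by rintro rfl; exact hac hab
  by_cases hva : v = a
  · subst hva; exact G.degree_twoSwitch_left hab hac hac' had
  by_cases hvb : v = b
  · subst hvb
    rw [twoSwitch_swap]
    exact G.degree_twoSwitch_left hab.symm hbd hbd' hbc
  by_cases hvc : v = c
  · subst hvc
    rw [twoSwitch_comm]
    exact G.degree_twoSwitch_left hcd (fun h => hac h.symm) hac'.symm hbc.symm
  by_cases hvd : v = d
  · subst hvd
    rw [twoSwitch_comm, twoSwitch_swap]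
    exact G.degree_twoSwitch_left hcd.symm (fun h => hbd h.symm) hbd'.symm had.symm
  rw [← card_neighborFinset_eq_degree, ← card_neighborFinset_eq_degree,
    G.neighborFinset_twoSwitch_of_ne hva hvb hvc hvd]

noncomputable def edgeMinDegree (G : SimpleGraph V) : Sym2 V → ℕ :=
  Sym2.lift ⟨fun u v => min (G.degree u) (G.degree v), fun _ _ => min_comm _ _⟩

@[simp]
lemma edgeMinDegree_mk (u v : V) : G.edgeMinDegree s(u, v) = min (G.degree u) (G.degree v) :=
  rfl

lemma specialty_eq_sum_edgeMinDegree : specialty G = ∑ e ∈ G.edgeFinset, G.edgeMinDegree e :=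
  rfl

lemma edgeMinDegree_congr {H : SimpleGraph V} (h : ∀ v, H.degree v = G.degree v) :
    H.edgeMinDegree = G.edgeMinDegree := by
  ext e
  induction e using Sym2.ind with
  | h u v => simp only [edgeMinDegree_mk, h]

lemma edgeFinset_twoSwitch (hac' : a ≠ c) (hbd' : b ≠ d) :
    (G.twoSwitch a b c d).edgeFinset =
      insert s(a, c) (insert s(b, d) (G.edgeFinset \ {s(a, b), s(c, d)})) := by
  ext e
  induction e using Sym2.ind with
  | h u v =>
    rw [mem_edgeFinset, Finset.mem_insert, Finset.mem_insert, Finset.mem_sdiff, mem_edgeFinset]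
    simp only [mem_edgeSet, twoSwitch, sup_adj, deleteEdges_adj, edge_adj,
      Set.mem_insert_iff, Set.mem_singleton_iff, Finset.mem_insert, Finset.mem_singleton,
      Sym2.eq_iff]
    grind [G.ne_of_adj]

lemma specialty_twoSwitch (hab : G.Adj a b) (hcd : G.Adj c d) (hac : ¬G.Adj a c)
    (hbd : ¬G.Adj b d) (hac' : a ≠ c) (hbd' : b ≠ d) :
    specialty (G.twoSwitch a b c d) + min (G.degree a) (G.degree b) +
        min (G.degree c) (G.degree d) =
      specialty G + min (G.degree a) (G.degree c) + min (G.degree b) (G.degree d) := by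
  have hsub : {s(a, b), s(c, d)} ⊆ G.edgeFinset := by
    simp [Finset.insert_subset_iff, hab, hcd]
  have had : a ≠ d := by rintro rfl; exact hac hcd.symm
  have hne : s(a, b) ≠ s(c, d) := by simp [hac', had]
  rw [specialty_eq_sum_edgeMinDegree, specialty_eq_sum_edgeMinDegree,
    G.edgeMinDegree_congr (G.degree_twoSwitch hab hcd hac hbd hac' hbd'),
    G.edgeFinset_twoSwitch hac' hbd', Finset.sum_insert (by simp [hac, G.ne_of_adj hab, had]),
    Finset.sum_insert (by simp [hbd]),
    ← Finset.sum_sdiff hsub, Finset.sum_pair hne]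
  simp only [edgeMinDegree_mk]
  ring

lemma existsUnique_not_adj_of_degree_eq_card_sub_two (hV : 2 ≤ Fintype.card V) {u : V}
    (hu : G.degree u = Fintype.card V - 2) : ∃! w, w ≠ u ∧ ¬G.Adj u w := by
  have hcard : ((G.neighborFinset u)ᶜ.erase u).card = 1 := by
    rw [Finset.card_erase_of_mem (by simp), Finset.card_compl, card_neighborFinset_eq_degree, hu]
    omega
  obtain ⟨w, hw⟩ := Finset.card_eq_one.mp hcard
  have hwu : w ≠ u ∧ ¬G.Adj u w := by simpa using hw.symm.subset (Finset.mem_singleton_self w)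
  exact ⟨w, hwu, fun z hz => by simpa [hz] using hw.subset (x := z)⟩

lemma exists_adj_not_adj_of_degree_lt {u w x : V} (hxw : G.degree x < G.degree w)
    (hux : G.Adj u x) (huw : ¬G.Adj u w) : ∃ y, G.Adj w y ∧ y ≠ x ∧ ¬G.Adj x y := by
  by_contra! h
  have hsub : G.neighborFinset w ⊆ (insert x (G.neighborFinset x)).erase u := by
    intro z hz
    rw [mem_neighborFinset] at hz
    simp only [Finset.mem_erase, Finset.mem_insert, mem_neighborFinset]
    exact ⟨by rintro rfl; exact huw hz.symm, (em (z = x)).imp_right (h z hz)⟩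
  have := Finset.card_le_card hsub
  rw [Finset.card_erase_of_mem (by simp [hux.symm]), Finset.card_insert_of_notMem (by simp),
    card_neighborFinset_eq_degree, card_neighborFinset_eq_degree] at this
  omega

end SimpleGraph

theorem havel_hakimi_style (k : ℕ) (hk : 2 ≤ k) (G : SimpleGraph (Fin k))
    (hmax : ∀ v, G.degree v ≤ k - 2) (hex : ∃ v, G.degree v = k - 2) :
    ∃ G' : SimpleGraph (Fin k),
      (Finset.univ.val.map fun v => G'.degree v) =
        (Finset.univ.val.map fun v => G.degree v) ∧
      specialty G ≤ specialty G' ∧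
      ∃ u w : Fin k, u ≠ w ∧ G'.degree u = k - 2 ∧
        (∀ x, G'.degree w ≤ G'.degree x) ∧
        ¬ G'.Adj u w ∧ (∀ x, x ≠ u → x ≠ w → G'.Adj u x) := by
  obtain ⟨u, hu⟩ := hex
  obtain ⟨w, ⟨hwu, huw⟩, hw_unique⟩ :=
    G.existsUnique_not_adj_of_degree_eq_card_sub_two (by simpa using hk) (by simpa using hu)
  by_cases hw_min : ∀ z, G.degree w ≤ G.degree z
  · exact ⟨G, rfl, le_rfl, u, w, hwu.symm, hu, hw_min, huw,
      fun z hzu hzw => by_contra fun h => hzw (hw_unique z ⟨hzu, h⟩)⟩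
  obtain ⟨z, hz⟩ := not_forall.mp hw_min
  obtain ⟨x, -, hx_min⟩ := exists_min_image univ (G.degree ·) ⟨u, mem_univ u⟩
  have hxw : G.degree x < G.degree w := (hx_min z (mem_univ z)).trans_lt (not_le.mp hz)
  have hxu : x ≠ u := by rintro rfl; have := hmax w; omega
  have hxw' : x ≠ w := by rintro rfl; exact lt_irrefl _ hxw
  have hux : G.Adj u x := by_contra fun h => hxw' (hw_unique x ⟨hxu, h⟩)
  obtain ⟨y, hwy, hyx, hxy⟩ := G.exists_adj_not_adj_of_degree_lt hxw hux huw
  have hyu : y ≠ u := by rintro rfl; exact huw hwy.symm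
  have hdeg := G.degree_twoSwitch hux hwy huw hxy hwu.symm hyx.symm
  have hspec := G.specialty_twoSwitch hux hwy huw hxy hwu.symm hyx.symm
  have hN := G.neighborFinset_twoSwitch_left (c := w) hux hwu.symm hyu.symm
  refine ⟨G.twoSwitch u x w y, Multiset.map_congr rfl fun v _ => hdeg v, ?_, u, x, hxu.symm,
    (hdeg u).trans hu, fun v => by simpa only [hdeg] using hx_min v (mem_univ v), ?_, ?_⟩
  · have := hmax w; have := hx_min y (mem_univ y)
    omega
  · simpa [← SimpleGraph.mem_neighborFinset, hN] using hxw'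
  · intro v hvu hvx
    rw [← SimpleGraph.mem_neighborFinset, hN]
    simpa [hvx] using (em (v = w)).imp_right (by_contra fun h => · (hw_unique v ⟨hvu, h⟩))
end
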